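/- The state ρ_{Φ⁺,Ω̂} produced by the dual map Ω̂ equals |φ_0⟩⟨φ_0| + (1/d) Σ_{m=1}^{d-1} (1 - x_m²)|0m⟩⟨0m|, where |φ_0⟩ = (1/√d)(|00⟩ + Σ_{i=1}^{d-1} x_i |ii⟩); its largest eigenvalue is (1 + Σ_{i=1}^{d-1} x_i²)/d, and the unit vector |ψ'⟩ = (|00⟩ + Σ_{i=1}^{d-1} x_i |ii⟩)/√(1 + Σ_{i=1}^{d-1} x_i²) is an eigenvector of ρ_{Φ⁺,Ω̂} for this largest eigenvalue. -/

import Mathlib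

open Matrix Kronecker BigOperators Finset

noncomputable section

/-- Standard basis vector `|i⟩⊗|j⟩` of `ℂ^d ⊗ ℂ^d`. -/
def stdVec (d : ℕ) (i j : Fin d) : Fin d × Fin d → ℂ := fun p => if p = (i, j) then 1 else 0

/-- The maximally entangled state `|Φ⁺⟩ = (1/√d) Σᵢ |i⟩⊗|i⟩`. -/
def phiPlus (d : ℕ) : Fin d × Fin d → ℂ :=
  fun p => if p.1 = p.2 then ((Real.sqrt d)⁻¹ : ℝ) else 0

/-- Kraus operators of the channel Ω. -/
def krausA (d : ℕ) [NeZero d] (x : Fin d → ℝ) : Fin d → Matrix (Fin d) (Fin d) ℂ :=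
  fun m => if m = 0 then Matrix.diagonal (fun i => (x i : ℂ))
    else Matrix.of (fun i j => if i = 0 ∧ j = m then ((Real.sqrt (1 - (x m) ^ 2) : ℝ) : ℂ) else 0)

/-- The output state `ρ_{ψ,Λ} = Σₘ (I ⊗ Kₘ)|ψ⟩⟨ψ|(I ⊗ Kₘ†)`. -/
def outChannel (d : ℕ) {ι : Type*} [Fintype ι] (K : ι → Matrix (Fin d) (Fin d) ℂ)
    (ψ : Fin d × Fin d → ℂ) : Matrix (Fin d × Fin d) (Fin d × Fin d) ℂ :=
  ∑ m, ((1 : Matrix (Fin d) (Fin d) ℂ) ⊗ₖ K m) * Matrix.vecMulVec ψ (star ψ) *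
    ((1 : Matrix (Fin d) (Fin d) ℂ) ⊗ₖ (K m)ᴴ)

end

/-!
Since `(I ⊗ M)|Φ⁺⟩ = vec M / √d`, the dual map sends `|Φ⁺⟩⟨Φ⁺|` to `(1/d) Σₘ |vec Aₘ†⟩⟨vec Aₘ†|`,
where `vec A₀† = Σᵢ xᵢ|ii⟩ = √d φ₀` and `vec Aₘ† = √(1 - xₘ²)|0m⟩` for `m ≠ 0`. As `φ₀` lives on
the diagonal `|aa⟩` and is orthogonal to every `|0m⟩` with `m ≠ 0`, it is an eigenvector with
eigenvalue `‖φ₀‖² = (Σᵢ xᵢ²)/d`. This is the largest one: Cauchy–Schwarz on the diagonal and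
`1 - xₘ² ≤ 1 ≤ Σᵢ xᵢ²` bound the quadratic form `⟨w, ρ w⟩` by `(Σᵢ xᵢ²)/d · ‖w‖²`, because the
diagonal and the row `|0m⟩, m ≠ 0` are disjoint sets of coordinates.
-/

namespace Matrix

variable {𝕜 n : Type*} [RCLike 𝕜]

theorem vecMulVec_smul_star_smul (z : 𝕜) (u : n → 𝕜) :
    vecMulVec (z • u) (star (z • u)) = (z * star z) • vecMulVec u (star u) := by
  rw [star_smul, smul_vecMulVec, vecMulVec_smul, smul_smul, mul_comm]

variable [Fintype n]

theorem mem_spectrum_of_mulVec_eq_smul [DecidableEq n] {A : Matrix n n 𝕜} {μ : 𝕜} {v : n → 𝕜}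
    (hv : v ≠ 0) (hAv : A *ᵥ v = μ • v) : μ ∈ spectrum 𝕜 A := by
  rw [← spectrum_toLin']
  exact (Module.End.hasEigenvalue_of_hasEigenvector
    ⟨Module.End.mem_eigenspace_iff.2 (by rwa [toLin'_apply]), hv⟩).mem_spectrum

theorem IsHermitian.iSup_eigenvalues_eq_of_eigenvector_of_le [DecidableEq n] {A : Matrix n n 𝕜}
    (hA : A.IsHermitian) {μ : ℝ} {v : n → 𝕜} (hv : v ≠ 0) (hAv : A *ᵥ v = (μ : 𝕜) • v)
    (hle : ∀ w : n → 𝕜, RCLike.re (star w ⬝ᵥ A *ᵥ w) ≤ μ * ∑ i, ‖w i‖ ^ 2) :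
    ⨆ i, hA.eigenvalues i = μ := by
  obtain ⟨i, hi⟩ : ∃ i, hA.eigenvalues i = μ := by
    obtain ⟨_, ⟨i, rfl⟩, hi⟩ := hA.spectrum_eq_image_range ▸ mem_spectrum_of_mulVec_eq_smul hv hAv
    exact ⟨i, RCLike.ofReal_injective hi⟩
  have : Nonempty n := ⟨i⟩
  refine le_antisymm (ciSup_le fun j => ?_) (hi ▸ le_ciSup (Finite.bddAbove_range _) i)
  calc hA.eigenvalues j ≤ μ * ‖hA.eigenvectorBasis j‖ ^ 2 := by
        rw [hA.eigenvalues_eq, EuclideanSpace.norm_sq_eq]; exact hle _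
    _ = μ := by rw [hA.eigenvectorBasis.orthonormal.1 j, one_pow, mul_one]

theorem mul_vecMulVec_star_mul_conjTranspose {m : Type*} (M : Matrix m n 𝕜) (u : n → 𝕜) :
    M * vecMulVec u (star u) * Mᴴ = vecMulVec (M *ᵥ u) (star (M *ᵥ u)) := by
  rw [mul_vecMulVec, vecMulVec_mul, star_mulVec]

theorem vecMulVec_star_mulVec (u w : n → 𝕜) :
    vecMulVec u (star u) *ᵥ w = (star u ⬝ᵥ w) • u := by
  rw [vecMulVec_mulVec, op_smul_eq_smul]

theorem re_star_dotProduct_vecMulVec_mulVec (u w : n → 𝕜) :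
    RCLike.re (star w ⬝ᵥ vecMulVec u (star u) *ᵥ w) = ‖star u ⬝ᵥ w‖ ^ 2 := by
  rw [vecMulVec_star_mulVec, dotProduct_smul, smul_eq_mul, star_dotProduct w u, RCLike.star_def,
    RCLike.mul_conj, ← RCLike.ofReal_pow, RCLike.ofReal_re]

end Matrix

theorem Finset.sum_diag_add_sum_erase_le {α : Type*} [Fintype α] [DecidableEq α]
    (f : α × α → ℝ) (hf : 0 ≤ f) (a₀ : α) :
    ∑ a, f (a, a) + ∑ b ∈ univ.erase a₀, f (a₀, b) ≤ ∑ p, f p := by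
  have hdiag : ∑ a ∈ univ.erase a₀, f (a, a) ≤ ∑ a ∈ univ.erase a₀, ∑ b, f (a, b) :=
    sum_le_sum fun a _ => single_le_sum (fun b _ => hf (a, b)) (mem_univ a)
  calc ∑ a, f (a, a) + ∑ b ∈ univ.erase a₀, f (a₀, b)
      = ∑ b, f (a₀, b) + ∑ a ∈ univ.erase a₀, f (a, a) := by
        rw [← add_sum_erase _ _ (mem_univ a₀),
          ← add_sum_erase _ (fun b => f (a₀, b)) (mem_univ a₀)]
        ring
    _ ≤ ∑ b, f (a₀, b) + ∑ a ∈ univ.erase a₀, ∑ b, f (a, b) := by gcongr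
    _ = ∑ p, f p := by
        rw [Fintype.sum_prod_type, ← add_sum_erase _ (fun a => ∑ b, f (a, b)) (mem_univ a₀)]

theorem norm_sum_ofReal_mul_sq_le {𝕜 ι : Type*} [RCLike 𝕜] (s : Finset ι) (f : ι → ℝ)
    (z : ι → 𝕜) :
    ‖∑ i ∈ s, (f i : 𝕜) * z i‖ ^ 2 ≤ (∑ i ∈ s, f i ^ 2) * ∑ i ∈ s, ‖z i‖ ^ 2 :=
  calc ‖∑ i ∈ s, (f i : 𝕜) * z i‖ ^ 2 ≤ (∑ i ∈ s, |f i| * ‖z i‖) ^ 2 := by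
        gcongr
        exact norm_sum_le_of_le s fun i _ => by rw [norm_mul, RCLike.norm_ofReal]
    _ ≤ (∑ i ∈ s, |f i| ^ 2) * ∑ i ∈ s, ‖z i‖ ^ 2 := sum_mul_sq_le_sq_mul_sq s _ _
    _ = (∑ i ∈ s, f i ^ 2) * ∑ i ∈ s, ‖z i‖ ^ 2 := by simp_rw [sq_abs]

variable {d : ℕ}

theorem stdVec_eq_pi_single (i j : Fin d) : stdVec d i j = Pi.single (i, j) 1 := by
  ext p; simp [stdVec, Pi.single_apply]

theorem vec_single_eq_smul_stdVec (i j : Fin d) (r : ℂ) :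
    vec (single i j r) = r • stdVec d j i := by
  rw [vec_single]
  ext p
  simp [stdVec, Pi.single_apply]

theorem vec_diagonal_eq_sum_smul_stdVec (f : Fin d → ℂ) :
    vec (diagonal f) = ∑ i, f i • stdVec d i i := by
  ext ⟨a, b⟩
  rw [Finset.sum_apply, sum_eq_single a (fun i _ hi => by simp [stdVec, hi.symm]) (by simp)]
  rcases eq_or_ne a b with rfl | hab
  · simp [vec, stdVec]
  · simp [vec, stdVec, hab.symm]

theorem phiPlus_eq_smul_vec_one :
    phiPlus d = ((√d : ℝ) : ℂ)⁻¹ • vec (1 : Matrix (Fin d) (Fin d) ℂ) := by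
  ext ⟨a, b⟩
  simp [phiPlus, vec, one_apply, eq_comm]

theorem one_kronecker_mulVec_phiPlus (M : Matrix (Fin d) (Fin d) ℂ) :
    ((1 : Matrix (Fin d) (Fin d) ℂ) ⊗ₖ M) *ᵥ phiPlus d = ((√d : ℝ) : ℂ)⁻¹ • vec M := by
  rw [phiPlus_eq_smul_vec_one, mulVec_smul, ← vec_mul_eq_mulVec, mul_one]

theorem outChannel_phiPlus {ι : Type*} [Fintype ι] (K : ι → Matrix (Fin d) (Fin d) ℂ) :
    outChannel d K (phiPlus d) = ∑ m, vecMulVec (((√d : ℝ) : ℂ)⁻¹ • vec (K m))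
      (star (((√d : ℝ) : ℂ)⁻¹ • vec (K m))) := by
  refine sum_congr rfl fun m _ => ?_
  have hK : (1 : Matrix (Fin d) (Fin d) ℂ) ⊗ₖ (K m)ᴴ = (1 ⊗ₖ K m)ᴴ := by
    rw [conjTranspose_kronecker, conjTranspose_one]
  rw [hK, mul_vecMulVec_star_mul_conjTranspose, one_kronecker_mulVec_phiPlus]

theorem star_stdVec_dotProduct (i j : Fin d) (w : Fin d × Fin d → ℂ) :
    star (stdVec d i j) ⬝ᵥ w = w (i, j) := by
  rw [stdVec_eq_pi_single, Pi.star_single, star_one, single_one_dotProduct]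

variable {x : Fin d → ℝ}

theorem star_vec_diagonal_dotProduct (w : Fin d × Fin d → ℂ) :
    star (vec (diagonal fun i => (x i : ℂ))) ⬝ᵥ w = ∑ a, (x a : ℂ) * w (a, a) := by
  rw [vec_diagonal_eq_sum_smul_stdVec, star_sum, sum_dotProduct]
  simp [star_stdVec_dotProduct]

variable [NeZero d]

theorem conjTranspose_krausA_zero : (krausA d x 0)ᴴ = diagonal fun i => (x i : ℂ) := by
  simp [krausA, diagonal_conjTranspose]

theorem conjTranspose_krausA_of_ne_zero {m : Fin d} (hm : m ≠ 0) :
    (krausA d x m)ᴴ = single m 0 ((√(1 - x m ^ 2) : ℝ) : ℂ) := by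
  ext i j
  simp [krausA, hm, single, conjTranspose_apply, apply_ite (starRingEnd ℂ), eq_comm, and_comm]

theorem vec_diagonal_eq_stdVec_add_sum (hx0 : x 0 = 1) :
    vec (diagonal fun i => (x i : ℂ))
      = stdVec d 0 0 + ∑ i ∈ univ.erase 0, (x i : ℂ) • stdVec d i i := by
  rw [vec_diagonal_eq_sum_smul_stdVec, ← add_sum_erase _ _ (mem_univ 0), hx0, Complex.ofReal_one,
    one_smul]

theorem outChannel_conjTranspose_krausA (hx1 : ∀ m, m ≠ 0 → x m ^ 2 ≤ 1) :
    outChannel d (fun m => (krausA d x m)ᴴ) (phiPlus d)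
      = vecMulVec (((√d : ℝ) : ℂ)⁻¹ • vec (diagonal fun i => (x i : ℂ)))
          (star (((√d : ℝ) : ℂ)⁻¹ • vec (diagonal fun i => (x i : ℂ))))
        + ∑ m ∈ univ.erase 0,
            (((1 - x m ^ 2) / d : ℝ) : ℂ) • vecMulVec (stdVec d 0 m) (star (stdVec d 0 m)) := by
  rw [outChannel_phiPlus, ← add_sum_erase _ _ (mem_univ 0), conjTranspose_krausA_zero]
  congr 1
  refine sum_congr rfl fun m hm => ?_
  rw [conjTranspose_krausA_of_ne_zero (ne_of_mem_erase hm), vec_single_eq_smul_stdVec, smul_smul,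
    vecMulVec_smul_star_smul]
  congr 1
  have h1 : 0 ≤ 1 - x m ^ 2 := sub_nonneg.2 (hx1 m (ne_of_mem_erase hm))
  rw [← Complex.ofReal_inv, ← Complex.ofReal_mul, Complex.star_def, Complex.conj_ofReal,
    ← Complex.ofReal_mul, ← sq, mul_pow, inv_pow, Real.sq_sqrt h1, Real.sq_sqrt d.cast_nonneg,
    inv_mul_eq_div]

theorem outChannel_conjTranspose_krausA_mulVec_vec_diagonal (hx1 : ∀ m, m ≠ 0 → x m ^ 2 ≤ 1) :
    outChannel d (fun m => (krausA d x m)ᴴ) (phiPlus d) *ᵥ vec (diagonal fun i => (x i : ℂ))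
      = (((∑ i, x i ^ 2) / d : ℝ) : ℂ) • vec (diagonal fun i => (x i : ℂ)) := by
  have hoff : ∀ m ∈ univ.erase 0, ((((1 - x m ^ 2) / d : ℝ) : ℂ) •
      vecMulVec (stdVec d 0 m) (star (stdVec d 0 m))) *ᵥ vec (diagonal fun i => (x i : ℂ)) = 0 :=
    fun m hm => by
      rw [smul_mulVec, vecMulVec_star_mulVec, star_stdVec_dotProduct]
      simp [vec, ne_of_mem_erase hm]
  rw [outChannel_conjTranspose_krausA hx1, add_mulVec, sum_mulVec, sum_eq_zero hoff, add_zero,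
    vecMulVec_star_mulVec, star_smul, smul_dotProduct, star_vec_diagonal_dotProduct, smul_smul]
  congr 1
  have hd : ((√d : ℝ) : ℂ)⁻¹ * ((√d : ℝ) : ℂ)⁻¹ = (d : ℂ)⁻¹ := by
    rw [← mul_inv, ← Complex.ofReal_mul, Real.mul_self_sqrt d.cast_nonneg, Complex.ofReal_natCast]
  simp only [vec, diagonal_apply_eq, Complex.star_def, map_inv₀, Complex.conj_ofReal, smul_eq_mul]
  push_cast
  rw [mul_right_comm, hd, div_eq_inv_mul]
  simp only [sq]

theorem re_star_dotProduct_outChannel_conjTranspose_krausA_mulVec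
    (hx1 : ∀ m, m ≠ 0 → x m ^ 2 ≤ 1) (w : Fin d × Fin d → ℂ) :
    RCLike.re (star w ⬝ᵥ outChannel d (fun m => (krausA d x m)ᴴ) (phiPlus d) *ᵥ w)
      = ‖∑ a, (x a : ℂ) * w (a, a)‖ ^ 2 / d
        + ∑ m ∈ univ.erase 0, (1 - x m ^ 2) / d * ‖w (0, m)‖ ^ 2 := by
  rw [outChannel_conjTranspose_krausA hx1, add_mulVec, dotProduct_add, map_add,
    re_star_dotProduct_vecMulVec_mulVec, sum_mulVec, dotProduct_sum, map_sum]
  congr 1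
  · rw [star_smul, smul_dotProduct, star_vec_diagonal_dotProduct, smul_eq_mul, norm_mul, mul_pow,
      norm_star, norm_inv, Complex.norm_real, Real.norm_of_nonneg (Real.sqrt_nonneg _), inv_pow,
      Real.sq_sqrt d.cast_nonneg, inv_mul_eq_div]
  · refine sum_congr rfl fun m _ => ?_
    rw [smul_mulVec, dotProduct_smul, smul_eq_mul, RCLike.re_to_complex, Complex.re_ofReal_mul,
      ← RCLike.re_to_complex, re_star_dotProduct_vecMulVec_mulVec, star_stdVec_dotProduct]

theorem re_star_dotProduct_outChannel_conjTranspose_krausA_mulVec_le (hx0 : x 0 = 1)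
    (hx1 : ∀ m, m ≠ 0 → x m ^ 2 ≤ 1) (w : Fin d × Fin d → ℂ) :
    RCLike.re (star w ⬝ᵥ outChannel d (fun m => (krausA d x m)ᴴ) (phiPlus d) *ᵥ w)
      ≤ (∑ i, x i ^ 2) / d * ∑ p, ‖w p‖ ^ 2 := by
  set S := ∑ i, x i ^ 2
  have hS : 1 ≤ S := by
    simpa [hx0] using single_le_sum (fun i _ => sq_nonneg (x i)) (mem_univ (0 : Fin d))
  have hrow : ∀ m ∈ univ.erase 0, (1 - x m ^ 2) / d * ‖w (0, m)‖ ^ 2 ≤ S / d * ‖w (0, m)‖ ^ 2 :=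
    fun m _ => by gcongr; nlinarith [sq_nonneg (x m)]
  rw [re_star_dotProduct_outChannel_conjTranspose_krausA_mulVec hx1]
  calc _ ≤ S / d * ∑ a, ‖w (a, a)‖ ^ 2 + S / d * ∑ m ∈ univ.erase 0, ‖w (0, m)‖ ^ 2 := by
        rw [mul_sum (univ.erase 0), div_mul_eq_mul_div]
        refine add_le_add ?_ (sum_le_sum hrow)
        gcongr
        exact norm_sum_ofReal_mul_sq_le _ _ _
    _ = S / d * (∑ a, ‖w (a, a)‖ ^ 2 + ∑ m ∈ univ.erase 0, ‖w (0, m)‖ ^ 2) := by ring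
    _ ≤ S / d * ∑ p, ‖w p‖ ^ 2 := by
        gcongr
        exact sum_diag_add_sum_erase_le (fun p => ‖w p‖ ^ 2) (fun p => by positivity) 0

theorem dual_output_state_general (d : ℕ) [NeZero d] (x : Fin d → ℝ)
    (hx0 : x 0 = 1) (hx : ∀ i : Fin d, i ≠ 0 → 0 < x i ∧ x i < 1)
    (hH : (outChannel d (fun m => (krausA d x m)ᴴ) (phiPlus d)).IsHermitian) :
    outChannel d (fun m => (krausA d x m)ᴴ) (phiPlus d)
      = Matrix.vecMulVec
          (((Real.sqrt d : ℝ) : ℂ)⁻¹ •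
            (stdVec d 0 0 + ∑ i ∈ Finset.univ.erase (0 : Fin d), (x i : ℂ) • stdVec d i i))
          (star (((Real.sqrt d : ℝ) : ℂ)⁻¹ •
            (stdVec d 0 0 + ∑ i ∈ Finset.univ.erase (0 : Fin d), (x i : ℂ) • stdVec d i i)))
        + ∑ m ∈ Finset.univ.erase (0 : Fin d),
            (((1 - (x m) ^ 2) / d : ℝ) : ℂ) •
              Matrix.vecMulVec (stdVec d 0 m) (star (stdVec d 0 m))
    ∧ (⨆ p : Fin d × Fin d, hH.eigenvalues p)
        = (1 + ∑ i ∈ Finset.univ.erase (0 : Fin d), (x i) ^ 2) / d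
    ∧ (outChannel d (fun m => (krausA d x m)ᴴ) (phiPlus d)).mulVec
          (((Real.sqrt (1 + ∑ i ∈ Finset.univ.erase (0 : Fin d), (x i) ^ 2) : ℝ) : ℂ)⁻¹ •
            (stdVec d 0 0 + ∑ i ∈ Finset.univ.erase (0 : Fin d), (x i : ℂ) • stdVec d i i))
        = (((1 + ∑ i ∈ Finset.univ.erase (0 : Fin d), (x i) ^ 2) / d : ℝ) : ℂ) •
            (((Real.sqrt (1 + ∑ i ∈ Finset.univ.erase (0 : Fin d), (x i) ^ 2) : ℝ) : ℂ)⁻¹ •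
              (stdVec d 0 0 + ∑ i ∈ Finset.univ.erase (0 : Fin d), (x i : ℂ) • stdVec d i i)) := by
  have hx1 : ∀ m, m ≠ 0 → x m ^ 2 ≤ 1 := fun m hm => pow_le_one₀ (hx m hm).1.le (hx m hm).2.le
  have hS : 1 + ∑ i ∈ univ.erase 0, x i ^ 2 = ∑ i, x i ^ 2 := by
    rw [← add_sum_erase _ _ (mem_univ 0), hx0, one_pow]
  have hv : vec (diagonal fun i => (x i : ℂ)) ≠ 0 := fun h => by
    simpa [vec, hx0] using congrFun h (0, 0)
  rw [← vec_diagonal_eq_stdVec_add_sum hx0, hS]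
  refine ⟨outChannel_conjTranspose_krausA hx1, hH.iSup_eigenvalues_eq_of_eigenvector_of_le hv
    (outChannel_conjTranspose_krausA_mulVec_vec_diagonal hx1)
    (re_star_dotProduct_outChannel_conjTranspose_krausA_mulVec_le hx0 hx1), ?_⟩
  rw [mulVec_smul, outChannel_conjTranspose_krausA_mulVec_vec_diagonal hx1, smul_comm]

/-- the state `ρ_{Φ⁺,Ω̂}` produced by the dual map `Ω̂` (Kraus operators `{Aₘ†}`)
equals `|φ₀⟩⟨φ₀| + (1/d) Σ_{m≠0} (1-xₘ²)|0m⟩⟨0m|` with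
`|φ₀⟩ = (1/√d)(|00⟩ + Σ_{i≠0} xᵢ|ii⟩)`; its largest eigenvalue is `(1 + Σ_{i≠0} xᵢ²)/d`,
and `|ψ'⟩ = (|00⟩ + Σ_{i≠0} xᵢ|ii⟩)/√(1 + Σ_{i≠0} xᵢ²)` is an eigenvector for it. -/
theorem dual_output_state (d : ℕ) [NeZero d] (hd : 3 ≤ d) (x : Fin d → ℝ)
    (hx0 : x 0 = 1) (hx : ∀ i : Fin d, i ≠ 0 → 0 < x i ∧ x i < 1)
    (hH : (outChannel d (fun m => (krausA d x m)ᴴ) (phiPlus d)).IsHermitian) :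
    outChannel d (fun m => (krausA d x m)ᴴ) (phiPlus d)
      = Matrix.vecMulVec
          (((Real.sqrt d : ℝ) : ℂ)⁻¹ •
            (stdVec d 0 0 + ∑ i ∈ Finset.univ.erase (0 : Fin d), (x i : ℂ) • stdVec d i i))
          (star (((Real.sqrt d : ℝ) : ℂ)⁻¹ •
            (stdVec d 0 0 + ∑ i ∈ Finset.univ.erase (0 : Fin d), (x i : ℂ) • stdVec d i i)))
        + ∑ m ∈ Finset.univ.erase (0 : Fin d),
            (((1 - (x m) ^ 2) / d : ℝ) : ℂ) •
              Matrix.vecMulVec (stdVec d 0 m) (star (stdVec d 0 m))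
    ∧ (⨆ p : Fin d × Fin d, hH.eigenvalues p)
        = (1 + ∑ i ∈ Finset.univ.erase (0 : Fin d), (x i) ^ 2) / d
    ∧ (outChannel d (fun m => (krausA d x m)ᴴ) (phiPlus d)).mulVec
          (((Real.sqrt (1 + ∑ i ∈ Finset.univ.erase (0 : Fin d), (x i) ^ 2) : ℝ) : ℂ)⁻¹ •
            (stdVec d 0 0 + ∑ i ∈ Finset.univ.erase (0 : Fin d), (x i : ℂ) • stdVec d i i))
        = (((1 + ∑ i ∈ Finset.univ.erase (0 : Fin d), (x i) ^ 2) / d : ℝ) : ℂ) •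
            (((Real.sqrt (1 + ∑ i ∈ Finset.univ.erase (0 : Fin d), (x i) ^ 2) : ℝ) : ℂ)⁻¹ •
              (stdVec d 0 0 + ∑ i ∈ Finset.univ.erase (0 : Fin d), (x i : ℂ) • stdVec d i i)) :=
  dual_output_state_general d x hx0 hx hH
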